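/- For a permutation σ of Fin n (n ≥ 2), the trace of σ on the second exterior power Λ²(W) of the standard representation W equals C(m_1, 2) − m_2 − m_1 + 1, where m_1 is the number of fixed points and m_2 the number of 2-cycles of σ. -/

import Mathlib

/-- The permutation matrix of `σ`, with `(P_σ)_{i,j} = 1` if `i = σ j` and `0` otherwise. -/
def permMat (n : ℕ) (σ : Equiv.Perm (Fin n)) : Matrix (Fin n) (Fin n) ℚ :=
  Matrix.of fun i j => if i = σ j then 1 else 0

/-- The hyperplane `{v ∈ ℚ^n : Σ_i v_i = 0}`, carrying the standard representation of `S_n`. -/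
noncomputable def zeroSum (n : ℕ) : Submodule ℚ (Fin n → ℚ) :=
  LinearMap.ker (∑ i : Fin n, LinearMap.proj (R := ℚ) (φ := fun _ : Fin n => ℚ) i)

lemma permMat_mulVec {n : ℕ} (σ : Equiv.Perm (Fin n)) (v : Fin n → ℚ) (i : Fin n) :
    (permMat n σ).mulVec v i = v (σ⁻¹ i) := by
  simp only [permMat, Matrix.mulVec, dotProduct, Matrix.of_apply, ite_mul, one_mul,
    zero_mul]
  rw [Finset.sum_eq_single (σ⁻¹ i) (fun j _ hj => if_neg (fun h => hj (by simp [h])))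
    (by simp)]
  simp

lemma permMat_mem_zeroSum {n : ℕ} (σ : Equiv.Perm (Fin n)) :
    ∀ v ∈ zeroSum n, Matrix.toLin' (permMat n σ) v ∈ zeroSum n := by
  intro v hv
  simp only [zeroSum, LinearMap.mem_ker, LinearMap.sum_apply, LinearMap.proj_apply,
    Matrix.toLin'_apply] at hv ⊢
  simp only [permMat_mulVec]
  rw [Equiv.sum_comp σ⁻¹ fun j => v j]
  exact hv

open ExteriorAlgebra in
/-- The endomorphism of the `k`-th exterior power induced by an endomorphism of `M`. -/
noncomputable def extPowMap (R : Type*) [CommRing R] {M : Type*} [AddCommGroup M] [Module R M]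
    (k : ℕ) (f : M →ₗ[R] M) : (⋀[R]^k M) →ₗ[R] (⋀[R]^k M) :=
  (ExteriorAlgebra.map f).toLinearMap.restrict (p := ⋀[R]^k M) (q := ⋀[R]^k M) <| by
    intro x hx
    rw [← ιMulti_span_fixedDegree] at hx ⊢
    induction hx using Submodule.span_induction with
    | mem x h =>
        obtain ⟨m, rfl⟩ := h
        rw [AlgHom.toLinearMap_apply, map_apply_ιMulti]
        exact Submodule.subset_span ⟨f ∘ m, rfl⟩
    | zero => simp
    | add x y _ _ hx hy => rw [map_add]; exact Submodule.add_mem _ hx hy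
    | smul r x _ hx => rw [map_smul]; exact Submodule.smul_mem _ r hx

/-!
For an endomorphism `f` of a free module of finite rank, the diagonal entries of `Λ²f` in the
basis `e_i ∧ e_j` (`i < j`) are the principal `2 × 2` minors of the matrix of `f`, so
`2 · tr Λ²f = (tr f)² - tr (f²)`. Since `ℚⁿ = W ⊕ ℚ·𝟙` and `σ` fixes `𝟙`, the trace of `σ` on `W`
is `m₁ - 1`. The fixed points of `σ²` are the fixed points of `σ` together with the points moved
by the 2-cycles, so `tr (σ²|W) = m₁ + 2m₂ - 1`, and
`((m₁ - 1)² - (m₁ + 2m₂ - 1)) / 2 = C(m₁, 2) - m₂ - m₁ + 1`.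
-/

theorem extPowMap_eq_map (R : Type*) [CommRing R] {M : Type*} [AddCommGroup M] [Module R M]
    (k : ℕ) (f : M →ₗ[R] M) : extPowMap R k f = exteriorPower.map k f := by
  ext v
  simp [extPowMap, ExteriorAlgebra.map_apply_ιMulti, Function.comp_def]

open Set.powersetCard in
theorem exteriorPower.trace_map_eq_sum_det_submatrix {R M ι : Type*} [CommRing R]
    [AddCommGroup M] [Module R M] [Fintype ι] [LinearOrder ι] (b : Module.Basis ι R M) (k : ℕ)
    (f : M →ₗ[R] M) :
    LinearMap.trace R _ (exteriorPower.map k f) =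
      ∑ s : Set.powersetCard ι k,
        ((LinearMap.toMatrix b b f).submatrix (ofFinEmbEquiv.symm s) (ofFinEmbEquiv.symm s)).det := by
  rw [LinearMap.trace_eq_matrix_trace R (b.exteriorPower k), Matrix.trace]
  refine Finset.sum_congr rfl fun s _ => ?_
  rw [Matrix.diag_apply, LinearMap.toMatrix_apply, exteriorPower.basis_apply,
    exteriorPower.map_apply_ιMulti_family, exteriorPower.basis_repr_apply,
    exteriorPower.ιMulti_family, exteriorPower.ιMultiDual_apply_ιMulti, ← Matrix.det_transpose]
  congr 1
  ext i j
  simp [LinearMap.toMatrix_apply]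

def finTwoOrderEmbEquiv (ι : Type*) [LinearOrder ι] :
    {p : ι × ι // p.1 < p.2} ≃ (Fin 2 ↪o ι) where
  toFun p := OrderEmbedding.ofStrictMono ![p.1.1, p.1.2] <|
    Fin.strictMono_iff_lt_succ.2 fun i => by fin_cases i; exact p.2
  invFun f := ⟨(f 0, f 1), f.strictMono (by decide)⟩
  left_inv p := rfl
  right_inv f := by ext i; fin_cases i <;> rfl

theorem Finset.sum_sum_eq_two_nsmul_sum_lt {ι M : Type*} [Fintype ι] [LinearOrder ι]
    [AddCommMonoid M] (g : ι → ι → M) (hsymm : ∀ i j, g i j = g j i) (hdiag : ∀ i, g i i = 0) :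
    ∑ i, ∑ j, g i j = 2 • ∑ p : {p : ι × ι // p.1 < p.2}, g p.1.1 p.1.2 := by
  have hsplit : ∀ i j, g i j = (if i < j then g i j else 0) + (if j < i then g j i else 0) := by
    intro i j
    rcases lt_trichotomy i j with h | rfl | h
    · simp [h, h.not_gt]
    · simp [hdiag]
    · simp [h, h.not_gt, hsymm]
  have hlt : ∑ p : {p : ι × ι // p.1 < p.2}, g p.1.1 p.1.2 =
      ∑ i, ∑ j, if i < j then g i j else 0 := by
    rw [← Finset.sum_subtype ({p : ι × ι | p.1 < p.2} : Finset _) (by simp) fun p => g p.1 p.2,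
      Finset.sum_filter, Fintype.sum_prod_type]
  rw [hlt, two_nsmul, Finset.sum_congr rfl fun i _ => Finset.sum_congr rfl fun j _ => hsplit i j]
  simp only [Finset.sum_add_distrib]
  rw [Finset.sum_comm (f := fun i j => if j < i then g j i else 0)]

open Set.powersetCard in
theorem Matrix.two_mul_sum_det_submatrix_powersetCard_two {R ι : Type*} [CommRing R] [Fintype ι]
    [LinearOrder ι] (A : Matrix ι ι R) :
    2 * ∑ s : Set.powersetCard ι 2,
        (A.submatrix (ofFinEmbEquiv.symm s) (ofFinEmbEquiv.symm s)).det =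
      A.trace ^ 2 - (A * A).trace := by
  set g : ι → ι → R := fun i j => A i i * A j j - A i j * A j i
  have hsum : ∑ s : Set.powersetCard ι 2,
      (A.submatrix (ofFinEmbEquiv.symm s) (ofFinEmbEquiv.symm s)).det =
        ∑ p : {p : ι × ι // p.1 < p.2}, g p.1.1 p.1.2 := by
    rw [← ofFinEmbEquiv.sum_comp, ← (finTwoOrderEmbEquiv ι).sum_comp]
    refine Fintype.sum_congr _ _ fun p => ?_
    rw [Equiv.symm_apply_apply, Matrix.det_fin_two]
    rfl
  have htotal : ∑ i, ∑ j, g i j = A.trace ^ 2 - (A * A).trace := by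
    simp only [g, Finset.sum_sub_distrib, Matrix.trace, Matrix.diag, Matrix.mul_apply, sq,
      Finset.sum_mul_sum]
  rw [hsum, two_mul, ← two_nsmul, ← Finset.sum_sum_eq_two_nsmul_sum_lt g (fun i j => by ring)
    (fun i => by ring), htotal]

theorem exteriorPower.two_mul_trace_map_two {R M : Type*} [CommRing R] [AddCommGroup M]
    [Module R M] [Module.Free R M] [Module.Finite R M] (f : M →ₗ[R] M) :
    2 * LinearMap.trace R _ (exteriorPower.map 2 f) =
      LinearMap.trace R M f ^ 2 - LinearMap.trace R M (f ∘ₗ f) := by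
  let b := (Module.Free.chooseBasis R M).reindex (Fintype.equivFin _)
  rw [exteriorPower.trace_map_eq_sum_det_submatrix b,
    Matrix.two_mul_sum_det_submatrix_powersetCard_two,
    LinearMap.trace_eq_matrix_trace R b f, LinearMap.trace_eq_matrix_trace R b (f ∘ₗ f),
    LinearMap.toMatrix_comp b b b]

theorem LinearMap.trace_restrict_ker {K M : Type*} [Field K] [AddCommGroup M] [Module K M]
    [FiniteDimensional K M] (φ : M →ₗ[K] K) {u : M} (hu : φ u ≠ 0) (g : M →ₗ[K] M)
    (hg : ∀ x ∈ LinearMap.ker φ, g x ∈ LinearMap.ker φ) :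
    LinearMap.trace K _ (g.restrict hg) = LinearMap.trace K M g - φ (g u) / φ u := by
  -- the projection onto `ker φ` along `u`
  let e : M →ₗ[K] M := LinearMap.id - ((φ u)⁻¹ • φ).smulRight u
  have he : ∀ x, e x ∈ LinearMap.ker φ := fun x => by
    simp [e]
    field_simp
    ring
  have he_id : ∀ x ∈ LinearMap.ker φ, e x = x := fun x hx => by
    simp_all [e]
  have hge : ∀ x, (g ∘ₗ e) x ∈ LinearMap.ker φ := fun x => hg _ (he x)
  have hrestrict : g.restrict hg = (g ∘ₗ e).restrict fun x _ => hge x := by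
    ext x
    simp [he_id x x.2]
  have hrank_one : g ∘ₗ ((φ u)⁻¹ • φ).smulRight u = ((φ u)⁻¹ • φ).smulRight (g u) := by
    ext x
    simp
  rw [hrestrict, LinearMap.trace_restrict_eq_of_forall_mem _ _ hge, LinearMap.comp_sub,
    LinearMap.comp_id, map_sub, hrank_one, LinearMap.trace_smulRight]
  simp [div_eq_inv_mul]

theorem trace_permMat {n : ℕ} (σ : Equiv.Perm (Fin n)) :
    (permMat n σ).trace = (Finset.univ.filter fun x => σ x = x).card := by
  simp [Matrix.trace, permMat, eq_comm, Finset.sum_boole]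

theorem restrict_permMat_comp {n : ℕ} (σ τ : Equiv.Perm (Fin n)) :
    (Matrix.toLin' (permMat n σ)).restrict (permMat_mem_zeroSum σ) ∘ₗ
        (Matrix.toLin' (permMat n τ)).restrict (permMat_mem_zeroSum τ) =
      (Matrix.toLin' (permMat n (σ * τ))).restrict (permMat_mem_zeroSum (σ * τ)) := by
  ext x i
  simp [permMat_mulVec]

theorem trace_restrict_permMat_zeroSum {n : ℕ} (hn : n ≠ 0) (σ : Equiv.Perm (Fin n)) :
    LinearMap.trace ℚ _ ((Matrix.toLin' (permMat n σ)).restrict (permMat_mem_zeroSum σ)) =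
      (Finset.univ.filter fun x => σ x = x).card - 1 := by
  have hone : (∑ i, LinearMap.proj i : (Fin n → ℚ) →ₗ[ℚ] ℚ) 1 ≠ 0 := by simpa using hn
  refine (LinearMap.trace_restrict_ker _ hone _ (permMat_mem_zeroSum σ)).trans ?_
  simp [permMat_mulVec, trace_permMat, hn]

section

open Finset

namespace Equiv.Perm

variable {α : Type*} [Fintype α] [DecidableEq α]

theorem sq_apply_eq_self_iff_card_support_cycleOf {σ : Perm α} {x : α} (hx : σ x ≠ x) :
    (σ ^ 2) x = x ↔ #(σ.cycleOf x).support = 2 := by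
  have hc := σ.isCycle_cycleOf hx
  have htwo_le := two_le_card_support_cycleOf_iff.2 hx
  rw [← cycleOf_pow_apply_self,
    ← hc.pow_eq_one_iff' (by rwa [cycleOf_apply_self]), ← orderOf_dvd_iff_pow_eq_one, hc.orderOf]
  exact ⟨fun h => le_antisymm (Nat.le_of_dvd two_pos h) htwo_le, fun h => h ▸ dvd_rfl⟩

theorem filter_sq_apply_eq_self_sdiff_filter_apply_eq_self (σ : Perm α) :
    univ.filter (fun x => (σ ^ 2) x = x) \ univ.filter (fun x => σ x = x) =
      (σ.cycleFactorsFinset.filter (#·.support = 2)).biUnion support := by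
  ext x
  simp only [mem_sdiff, mem_filter, mem_univ, true_and, mem_biUnion]
  constructor
  · rintro ⟨h2, h1⟩
    exact ⟨σ.cycleOf x, ⟨cycleOf_mem_cycleFactorsFinset_iff.2 (mem_support.2 h1),
      (sq_apply_eq_self_iff_card_support_cycleOf h1).1 h2⟩,
      mem_support_cycleOf_iff.2 ⟨SameCycle.refl _ _, mem_support.2 h1⟩⟩
  · rintro ⟨c, ⟨hc, hcard⟩, hx⟩
    obtain rfl := (σ.eq_cycleOf_of_mem_cycleFactorsFinset_iff c hc x).2 hx
    have h1 : σ x ≠ x := mem_support.1 (mem_cycleFactorsFinset_support_le hc hx)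
    exact ⟨(sq_apply_eq_self_iff_card_support_cycleOf h1).2 hcard, h1⟩

theorem count_two_cycleType (σ : Perm α) :
    σ.cycleType.count 2 = #(σ.cycleFactorsFinset.filter (#·.support = 2)) := by
  rw [cycleType_def, Multiset.count_map, Finset.card, Finset.filter_val]
  exact congrArg Multiset.card (Multiset.filter_congr fun c _ => eq_comm)

theorem card_filter_sq_apply_eq_self (σ : Perm α) :
    #(univ.filter fun x => (σ ^ 2) x = x) =
      #(univ.filter fun x => σ x = x) + 2 * σ.cycleType.count 2 := by
  have hsub : univ.filter (fun x => σ x = x) ⊆ univ.filter (fun x => (σ ^ 2) x = x) :=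
    fun x hx => by simp_all [sq]
  rw [← card_sdiff_add_card_eq_card hsub, filter_sq_apply_eq_self_sdiff_filter_apply_eq_self,
    card_biUnion, sum_congr rfl fun c hc => (mem_filter.1 hc).2, sum_const, smul_eq_mul,
    count_two_cycleType, add_comm, mul_comm]
  intro c hc d hd hcd
  exact (σ.cycleFactorsFinset_pairwise_disjoint (mem_filter.1 hc).1 (mem_filter.1 hd).1
    hcd).disjoint_support

end Equiv.Perm

end

/-- For `n ≥ 2`, the trace of `σ` on `Λ²(W)`, the second exterior power of the standard
representation `W = {v : Σ v_i = 0}`, equals `C(m₁,2) - m₂ - m₁ + 1`, where `m₁` is the number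
of fixed points and `m₂` the number of 2-cycles of `σ`. -/
theorem trace_extPow_two_standardRep {n : ℕ} (hn : 2 ≤ n) (σ : Equiv.Perm (Fin n)) :
    LinearMap.trace ℚ _
        (extPowMap ℚ 2 ((Matrix.toLin' (permMat n σ)).restrict (permMat_mem_zeroSum σ))) =
      (Nat.choose (Finset.univ.filter fun x => σ x = x).card 2 : ℚ)
        - σ.cycleType.count 2 - (Finset.univ.filter fun x => σ x = x).card + 1 := by
  have hn0 : n ≠ 0 := by omega
  have key := exteriorPower.two_mul_trace_map_two
    ((Matrix.toLin' (permMat n σ)).restrict (permMat_mem_zeroSum σ))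
  rw [restrict_permMat_comp, ← sq, trace_restrict_permMat_zeroSum hn0,
    trace_restrict_permMat_zeroSum hn0, Equiv.Perm.card_filter_sq_apply_eq_self] at key
  rw [extPowMap_eq_map, Nat.cast_choose_two]
  push_cast at key
  linarith
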